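/- Let R be a bleached local ring. The ring ℒ₃(R) = {[[a₁₁,0,0],[0,a₂₂,0],[a₃₁,0,a₃₃]]} is quasipolar if and only if R is uniquely bleached. -/
import Mathlib


/-- `q` is quasinilpotent: `1 + q*x` is a unit for every `x` commuting with `q`. -/
def Quasinilpotent {S : Type*} [Ring S] (q : S) : Prop :=
  ∀ x : S, q * x = x * q → IsUnit (1 + q * x)

/-- `a` is quasipolar: there is an idempotent `p` in the double commutant of `a`
with `a + p` a unit and `a*p` quasinilpotent. -/
def Quasipolar {S : Type*} [Ring S] (a : S) : Prop :=
  ∃ p : S, p * p = p ∧ (∀ y : S, y * a = a * y → p * y = y * p) ∧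
    IsUnit (a + p) ∧ Quasinilpotent (a * p)

/-- The subring `ℒ₃(R)` of `M₃(R)` of matrices with entries only in positions
(1,1), (2,2), (3,1), (3,3). -/
def L3 (R : Type*) [Ring R] : Subring (Matrix (Fin 3) (Fin 3) R) where
  carrier := {A | A 0 1 = 0 ∧ A 0 2 = 0 ∧ A 1 0 = 0 ∧ A 1 2 = 0 ∧ A 2 1 = 0}
  zero_mem' := by simp
  one_mem' := by simp [Matrix.one_apply]
  add_mem' := by rintro A B ⟨h1,h2,h3,h4,h5⟩ ⟨g1,g2,g3,g4,g5⟩; simp_all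
  neg_mem' := by rintro A ⟨h1,h2,h3,h4,h5⟩; simp_all
  mul_mem' := by
    rintro A B ⟨h1,h2,h3,h4,h5⟩ ⟨g1,g2,g3,g4,g5⟩
    refine ⟨?_,?_,?_,?_,?_⟩ <;>
      simp [Matrix.mul_apply, Fin.sum_univ_three, h1,h2,h3,h4,h5,g1,g2,g3,g4,g5]

/-- `R` is bleached: for every `a` in the Jacobson radical and unit `b`,
the maps `x ↦ b*x - x*a` and `x ↦ a*x - x*b` are surjective. -/
def Bleached (R : Type*) [Ring R] : Prop :=
  ∀ a b : R, a ∈ (⊥ : Ideal R).jacobson → IsUnit b →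
    Function.Surjective (fun x : R => b * x - x * a) ∧
      Function.Surjective (fun x : R => a * x - x * b)

/-- `R` is uniquely bleached: for every `a` in the Jacobson radical and unit `b`,
the maps `x ↦ b*x - x*a` and `x ↦ a*x - x*b` are bijective. -/
def UniquelyBleached (R : Type*) [Ring R] : Prop :=
  ∀ a b : R, a ∈ (⊥ : Ideal R).jacobson → IsUnit b →
    Function.Bijective (fun x : R => b * x - x * a) ∧
      Function.Bijective (fun x : R => a * x - x * b)

section LocalAux
variable {R : Type*} [Ring R] [IsLocalRing R]

lemma locOr (a : R) : IsUnit a ∨ IsUnit (1 - a) :=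
  IsLocalRing.isUnit_or_isUnit_of_add_one (by abel)

lemma isUnit_of_leftInv {s x : R} (h : s * x = 1) : IsUnit x := by
  rcases locOr (x * s) with hu | hu
  · obtain ⟨u, hu⟩ := hu
    have hinv : x * (s * ↑u⁻¹) = 1 := by
      rw [← mul_assoc, ← hu, Units.mul_inv]
    have hs : s * ↑u⁻¹ = s := by
      calc s * ↑u⁻¹ = (s * x) * (s * ↑u⁻¹) := by rw [h, one_mul]
        _ = s * (x * (s * ↑u⁻¹)) := by rw [mul_assoc]
        _ = s := by rw [hinv, mul_one]
    rw [hs] at hinv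
    exact ⟨⟨x, s, hinv, h⟩, rfl⟩
  · obtain ⟨u, hu⟩ := hu
    have h0 : ↑u * x = 0 := by
      rw [hu, sub_mul, one_mul, mul_assoc, h, mul_one, sub_self]
    have hx0 : x = 0 := by
      have := congrArg (fun t => (↑u⁻¹ : R) * t) h0
      simpa [← mul_assoc] using this
    rw [hx0, mul_zero] at h
    exact absurd h.symm one_ne_zero

lemma isUnit_of_rightInv {s x : R} (h : x * s = 1) : IsUnit x := by
  rcases locOr (s * x) with hu | hu
  · obtain ⟨u, hu⟩ := hu
    have hinv : (↑u⁻¹ * s) * x = 1 := by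
      rw [mul_assoc, ← hu, Units.inv_mul]
    have hs : ↑u⁻¹ * s = s := by
      calc (↑u⁻¹ * s : R) = ((↑u⁻¹ * s) * x) * s := by
              rw [mul_assoc (↑u⁻¹ * s) x s, h, mul_one]
        _ = s := by rw [hinv, one_mul]
    rw [hs] at hinv
    exact ⟨⟨x, s, h, hinv⟩, rfl⟩
  · obtain ⟨u, hu⟩ := hu
    have h0 : x * ↑u = 0 := by
      rw [hu, mul_sub, mul_one, ← mul_assoc, h, one_mul, sub_self]
    have hx0 : x = 0 := by
      have := congrArg (fun t => t * (↑u⁻¹ : R)) h0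
      simpa [mul_assoc] using this
    rw [hx0, zero_mul] at h
    exact absurd h.symm one_ne_zero

lemma nonunit_mul_left {a : R} (r : R) (h : ¬IsUnit a) : ¬IsUnit (r * a) := by
  intro hu
  obtain ⟨u, hu⟩ := hu
  exact h (isUnit_of_leftInv (x := a) (s := ↑u⁻¹ * r)
    (by rw [mul_assoc, ← hu, Units.inv_mul]))

lemma nonunit_mul_right {a : R} (r : R) (h : ¬IsUnit a) : ¬IsUnit (a * r) := by
  intro hu
  obtain ⟨u, hu⟩ := hu
  exact h (isUnit_of_rightInv (x := a) (s := r * ↑u⁻¹)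
    (by rw [← mul_assoc, ← hu, Units.mul_inv]))

lemma one_add_nonunit {a : R} (h : ¬IsUnit a) : IsUnit (1 + a) := by
  rcases locOr (-a) with hu | hu
  · exact absurd (by simpa using hu.neg) h
  · simpa [sub_neg_eq_add] using hu

lemma idem_zero_or_one {p : R} (h : p * p = p) : p = 0 ∨ p = 1 := by
  rcases locOr p with hu | hu
  · right
    exact hu.mul_left_cancel (by rw [h, mul_one])
  · left
    have h0 : (1 - p) * p = (1 - p) * 0 := by
      rw [sub_mul, one_mul, h, sub_self, mul_zero]
    exact hu.mul_left_cancel h0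

lemma mem_jac_iff {a : R} : a ∈ (⊥ : Ideal R).jacobson ↔ ¬ IsUnit a := by
  constructor
  · intro hj hu
    obtain ⟨u, hu⟩ := hu
    obtain ⟨z, hz⟩ := Ideal.mem_jacobson_iff.1 hj (-(↑u⁻¹ : R))
    rw [Ideal.mem_bot] at hz
    have heq : z * -↑u⁻¹ * a = -z := by
      rw [mul_assoc, ← hu]
      simp
    rw [heq] at hz
    simp at hz
  · intro ha
    rw [Ideal.jacobson, Ideal.mem_sInf]
    rintro M ⟨-, hM⟩
    by_contra haM
    have hlt : M < M ⊔ Ideal.span {a} := by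
      refine lt_of_le_of_ne le_sup_left (fun h => haM ?_)
      rw [h]
      exact Ideal.mem_sup_right (Ideal.subset_span rfl)
    have htop : M ⊔ Ideal.span {a} = ⊤ := hM.out.2 _ hlt
    have h1 : (1 : R) ∈ M ⊔ Ideal.span {a} := htop ▸ Submodule.mem_top
    obtain ⟨m, hm, s, hs, hms⟩ := Submodule.mem_sup.1 h1
    obtain ⟨r, hr⟩ := Submodule.mem_span_singleton.1 hs
    have hra : ¬IsUnit s := by
      rw [← hr]
      exact nonunit_mul_left r ha
    have hmn : ¬IsUnit m := fun h => hM.out.1 (Ideal.eq_top_of_isUnit_mem M hm h)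
    rcases IsLocalRing.isUnit_or_isUnit_of_add_one hms with h | h
    · exact hmn h
    · exact hra h

end LocalAux

section Ework
variable {R : Type*} [Ring R]

def E (a e c d : R) : L3 R :=
  ⟨!![a,0,0;0,e,0;c,0,d], by
    refine ⟨?_,?_,?_,?_,?_⟩ <;> rfl⟩

lemma E_val (a e c d : R) :
    ((E a e c d : L3 R) : Matrix (Fin 3) (Fin 3) R) = !![a,0,0;0,e,0;c,0,d] := rfl

lemma E_mul (a e c d a' e' c' d' : R) :
    E a e c d * E a' e' c' d' = E (a*a') (e*e') (c*a' + d*c') (d*d') := by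
  apply Subtype.ext
  show (!![a,0,0;0,e,0;c,0,d] * !![a',0,0;0,e',0;c',0,d'] : Matrix (Fin 3) (Fin 3) R) = _
  ext i j
  fin_cases i <;> fin_cases j <;>
    simp [E_val, Matrix.mul_apply, Fin.sum_univ_three]

lemma E_add (a e c d a' e' c' d' : R) :
    E a e c d + E a' e' c' d' = E (a+a') (e+e') (c+c') (d+d') := by
  apply Subtype.ext
  show (!![a,0,0;0,e,0;c,0,d] + !![a',0,0;0,e',0;c',0,d'] : Matrix (Fin 3) (Fin 3) R) = _
  ext i j
  fin_cases i <;> fin_cases j <;> simp [E_val]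

lemma E_one : (1 : L3 R) = E 1 1 0 1 := by
  apply Subtype.ext
  show (1 : Matrix (Fin 3) (Fin 3) R) = _
  ext i j
  fin_cases i <;> fin_cases j <;> simp [E_val, Matrix.one_apply, Matrix.vecHead, Matrix.vecTail]

lemma eta (A : L3 R) :
    A = E ((A : Matrix (Fin 3) (Fin 3) R) 0 0) ((A : Matrix (Fin 3) (Fin 3) R) 1 1)
        ((A : Matrix (Fin 3) (Fin 3) R) 2 0) ((A : Matrix (Fin 3) (Fin 3) R) 2 2) := by
  obtain ⟨h1,h2,h3,h4,h5⟩ := A.2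
  apply Subtype.ext
  ext i j
  fin_cases i <;> fin_cases j <;> simp_all [E_val, Matrix.vecHead, Matrix.vecTail]

lemma E_cases (A : L3 R) : ∃ a e c d : R, A = E a e c d :=
  ⟨_, _, _, _, eta A⟩

lemma E_ext {a e c d a' e' c' d' : R} (h1 : a = a') (h2 : e = e') (h3 : c = c')
    (h4 : d = d') : E a e c d = E a' e' c' d' := by rw [h1, h2, h3, h4]

lemma E_inj00 {a e c d a' e' c' d' : R} (h : E a e c d = E a' e' c' d') : a = a' := by
  have := congrArg (fun X : L3 R => (X : Matrix (Fin 3) (Fin 3) R) 0 0) h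
  simpa [E_val] using this

lemma E_inj11 {a e c d a' e' c' d' : R} (h : E a e c d = E a' e' c' d') : e = e' := by
  have := congrArg (fun X : L3 R => (X : Matrix (Fin 3) (Fin 3) R) 1 1) h
  simpa [E_val] using this

lemma E_inj20 {a e c d a' e' c' d' : R} (h : E a e c d = E a' e' c' d') : c = c' := by
  have := congrArg (fun X : L3 R => (X : Matrix (Fin 3) (Fin 3) R) 2 0) h
  simpa [E_val] using this

lemma E_inj22 {a e c d a' e' c' d' : R} (h : E a e c d = E a' e' c' d') : d = d' := by
  have := congrArg (fun X : L3 R => (X : Matrix (Fin 3) (Fin 3) R) 2 2) h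
  simpa [E_val] using this

lemma E_isUnit {a e c d : R} (ha : IsUnit a) (he : IsUnit e) (hd : IsUnit d) :
    IsUnit (E a e c d) := by
  obtain ⟨u, hu⟩ := ha
  obtain ⟨v, hv⟩ := he
  obtain ⟨w, hw⟩ := hd
  refine isUnit_iff_exists.2 ⟨E ↑u⁻¹ ↑v⁻¹ (-(↑w⁻¹ * c * ↑u⁻¹)) ↑w⁻¹, ?_, ?_⟩
  · rw [E_mul, E_one]
    subst hu hv hw
    congr 1 <;> simp [mul_assoc, ← mul_assoc]
  · rw [E_mul, E_one]
    subst hu hv hw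
    congr 1
    · simp
    · simp
    · simp [mul_assoc, ← mul_assoc]
    · simp

lemma unit_entries {a e c d : R} (h : IsUnit (E a e c d)) :
    IsUnit a ∧ IsUnit e ∧ IsUnit d := by
  obtain ⟨B, h1, h2⟩ := isUnit_iff_exists.1 h
  obtain ⟨a', e', c', d', rfl⟩ := E_cases B
  rw [E_mul, E_one] at h1 h2
  exact ⟨⟨⟨a, a', E_inj00 h1, E_inj00 h2⟩, rfl⟩,
         ⟨⟨e, e', E_inj11 h1, E_inj11 h2⟩, rfl⟩,
         ⟨⟨d, d', E_inj22 h1, E_inj22 h2⟩, rfl⟩⟩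

end Ework

section Combined
variable {R : Type*} [Ring R] [IsLocalRing R]

lemma E_qnil {a e c d : R} (ha : ¬IsUnit a) (he : ¬IsUnit e) (hd : ¬IsUnit d) :
    Quasinilpotent (E a e c d) := by
  intro x _
  obtain ⟨x1, x2, x3, x4, rfl⟩ := E_cases x
  rw [E_mul, E_one, E_add]
  exact E_isUnit (one_add_nonunit (nonunit_mul_right x1 ha))
    (one_add_nonunit (nonunit_mul_right x2 he))
    (one_add_nonunit (nonunit_mul_right x4 hd))

lemma pe_exists (e : R) : ∃ pe : R, pe * pe = pe ∧ (∀ y : R, pe * y = y * pe) ∧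
    IsUnit (e + pe) ∧ ¬IsUnit (e * pe) := by
  by_cases he : IsUnit e
  · exact ⟨0, by simp, fun y => by simp, by simpa using he,
      by simp⟩
  · exact ⟨1, by simp, fun y => by simp,
      by simpa [add_comm] using one_add_nonunit he, by simpa using he⟩

end Combined

/-- For a bleached local ring `R`, `ℒ₃(R)` is quasipolar iff `R` is uniquely bleached. -/
theorem L3_quasipolar_iff_uniquelyBleached {R : Type*} [Ring R] [IsLocalRing R]
    (hb : Bleached R) : (∀ A : L3 R, Quasipolar A) ↔ UniquelyBleached R := by
  constructor
  · -- forward: quasipolar ⇒ uniquely bleached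
    intro hQ a b ha hbu
    have ha' : ¬IsUnit a := mem_jac_iff.1 ha
    obtain ⟨S1, S2⟩ := hb a b ha hbu
    obtain ⟨u, huv⟩ := hbu
    -- kernel of x ↦ b*x - x*a is trivial
    have ker1 : ∀ z : R, b * z = z * a → z = 0 := by
      intro z hz
      obtain ⟨p, hpp, hcomm, hunit, hqnil⟩ := hQ (E a 0 0 b)
      obtain ⟨p1, p2, t, p4, rfl⟩ := E_cases p
      rw [E_mul] at hpp
      rw [E_add] at hunit
      have hp1 : p1 = 1 := by
        rcases idem_zero_or_one (E_inj00 hpp) with h | h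
        · exfalso
          apply ha'
          have h00 := (unit_entries hunit).1
          rwa [h, add_zero] at h00
        · exact h
      subst hp1
      have hp4 : p4 = 0 := by
        rcases idem_zero_or_one (E_inj22 hpp) with h | h
        · exact h
        · exfalso
          subst h
          have hq : E a 0 0 b * E 1 p2 t 1 = E a 0 (b*t) b := by
            rw [E_mul]
            exact E_ext (by simp) (by simp) (by simp) (by simp)
          rw [hq] at hqnil
          obtain ⟨s, hs⟩ := S1 (-t)
          have hs' : b * s = s * a - t := by
            have hs0 : b*s - s*a = -t := hs
            calc b*s = (b*s - s*a) + s*a := by noncomm_ring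
              _ = s*a - t := by rw [hs0]; noncomm_ring
          have hu1 : (↑u⁻¹ : R) * (b * t) = t := by
            rw [← huv, ← mul_assoc, Units.inv_mul, one_mul]
          have hcx : E a 0 (b*t) b * E 0 0 s (-(↑u⁻¹ : R)) =
              E 0 0 s (-(↑u⁻¹ : R)) * E a 0 (b*t) b := by
            rw [E_mul, E_mul]
            refine E_ext (by simp) (by simp) ?_ ?_
            · calc (b*t)*0 + b*s = s*a - t := by rw [mul_zero, zero_add, hs']
                _ = s*a + (-(↑u⁻¹:R))*(b*t) := by
                    rw [neg_mul, hu1, sub_eq_add_neg]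
            · rw [← huv]; simp
          have hres := hqnil _ hcx
          have hprod : E a 0 (b*t) b * E 0 0 s (-(↑u⁻¹:R)) = E 0 0 (b*s) (-1) := by
            rw [E_mul]
            refine E_ext (by simp) (by simp) (by simp) ?_
            rw [← huv]; simp
          rw [hprod, E_one, E_add] at hres
          have h0 : IsUnit ((1 : R) + -1) := (unit_entries hres).2.2
          rw [add_neg_cancel] at h0
          exact not_isUnit_zero h0
      subst hp4
      have hy : E 0 0 z 0 * E a 0 0 b = E a 0 0 b * E 0 0 z 0 := by
        rw [E_mul, E_mul]
        exact E_ext (by simp) (by simp) (by simp [hz]) (by simp)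
      have hpy := hcomm _ hy
      rw [E_mul, E_mul] at hpy
      have hcor := E_inj20 hpy
      simpa using hcor.symm
    -- kernel of x ↦ a*x - x*b is trivial
    have ker2 : ∀ z : R, a * z = z * b → z = 0 := by
      intro z hz
      obtain ⟨p, hpp, hcomm, hunit, hqnil⟩ := hQ (E b 0 0 a)
      obtain ⟨p1, p2, t, p4, rfl⟩ := E_cases p
      rw [E_mul] at hpp
      rw [E_add] at hunit
      have hp4 : p4 = 1 := by
        rcases idem_zero_or_one (E_inj22 hpp) with h | h
        · exfalso
          apply ha'
          have h22 := (unit_entries hunit).2.2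
          rwa [h, add_zero] at h22
        · exact h
      subst hp4
      have hp1 : p1 = 0 := by
        rcases idem_zero_or_one (E_inj00 hpp) with h | h
        · exact h
        · exfalso
          subst h
          have hq : E b 0 0 a * E 1 p2 t 1 = E b 0 (a*t) a := by
            rw [E_mul]
            exact E_ext (by simp) (by simp) (by simp) (by simp)
          rw [hq] at hqnil
          obtain ⟨s, hs⟩ := S2 ((a*t) * ↑u⁻¹)
          have hs0 : a*s - s*b = (a*t) * ↑u⁻¹ := hs
          have hub1 : (↑u⁻¹ : R) * b = 1 := by rw [← huv, Units.inv_mul]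
          have hcx : E b 0 (a*t) a * E (-(↑u⁻¹ : R)) 0 s 0 =
              E (-(↑u⁻¹ : R)) 0 s 0 * E b 0 (a*t) a := by
            rw [E_mul, E_mul]
            refine E_ext ?_ (by simp) ?_ (by simp)
            · rw [← huv]; simp
            · calc (a*t)*(-(↑u⁻¹:R)) + a*s = a*s - (a*t)*↑u⁻¹ := by noncomm_ring
                _ = s*b := by rw [← hs0]; noncomm_ring
                _ = s*b + 0*(a*t) := by rw [zero_mul, add_zero]
          have hres := hqnil _ hcx
          have hprod : E b 0 (a*t) a * E (-(↑u⁻¹:R)) 0 s 0 =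
              E (-1) 0 ((a*t)*(-(↑u⁻¹:R)) + a*s) 0 := by
            rw [E_mul]
            refine E_ext ?_ (by simp) rfl (by simp)
            rw [← huv]; simp
          rw [hprod, E_one, E_add] at hres
          have h0 : IsUnit ((1 : R) + -1) := (unit_entries hres).1
          rw [add_neg_cancel] at h0
          exact not_isUnit_zero h0
      subst hp1
      have hy : E 0 0 z 0 * E b 0 0 a = E b 0 0 a * E 0 0 z 0 := by
        rw [E_mul, E_mul]
        exact E_ext (by simp) (by simp) (by simp [← hz]) (by simp)
      have hpy := hcomm _ hy
      rw [E_mul, E_mul] at hpy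
      have hcor := E_inj20 hpy
      simp at hcor
      exact hcor
    refine ⟨⟨?_, S1⟩, ⟨?_, S2⟩⟩
    · intro x y hxy
      have hxy' : b*x - x*a = b*y - y*a := hxy
      have h1 : b*(x-y) - (x-y)*a = 0 := by
        have hexp : b*(x-y) - (x-y)*a = (b*x - x*a) - (b*y - y*a) := by noncomm_ring
        rw [hexp, hxy', sub_self]
      have h2 : b*(x-y) = (x-y)*a := by rwa [sub_eq_zero] at h1
      exact sub_eq_zero.1 (ker1 _ h2)
    · intro x y hxy
      have hxy' : a*x - x*b = a*y - y*b := hxy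
      have h1 : a*(x-y) - (x-y)*b = 0 := by
        have hexp : a*(x-y) - (x-y)*b = (a*x - x*b) - (a*y - y*b) := by noncomm_ring
        rw [hexp, hxy', sub_self]
      have h2 : a*(x-y) = (x-y)*b := by rwa [sub_eq_zero] at h1
      exact sub_eq_zero.1 (ker2 _ h2)
  · -- reverse: uniquely bleached ⇒ quasipolar
    intro hub A
    obtain ⟨a, e, c, d, rfl⟩ := E_cases A
    obtain ⟨pe, hpe1, hpe2, hpe3, hpe4⟩ := pe_exists e
    by_cases ha : IsUnit a <;> by_cases hd : IsUnit d
    · -- both units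
      refine ⟨E 0 pe 0 0, ?_, ?_, ?_, ?_⟩
      · rw [E_mul]
        exact E_ext (by simp) hpe1 (by simp) (by simp)
      · intro y _
        obtain ⟨y1, y2, y3, y4, rfl⟩ := E_cases y
        rw [E_mul, E_mul]
        exact E_ext (by simp) (hpe2 y2) (by simp) (by simp)
      · rw [E_add]
        exact E_isUnit (by simpa using ha) hpe3 (by simpa using hd)
      · rw [E_mul]
        have hrw : E (a*0) (e*pe) (c*0 + d*0) (d*0) = E 0 (e*pe) 0 0 :=
          E_ext (by simp) rfl (by simp) (by simp)
        rw [hrw]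
        exact E_qnil not_isUnit_zero hpe4 not_isUnit_zero
    · -- a unit, d nonunit
      obtain ⟨t, ht⟩ := (hub d a (mem_jac_iff.2 hd) ha).2.2 c
      have ht' : d*t - t*a = c := ht
      have hinj := (hub d a (mem_jac_iff.2 hd) ha).2.1
      refine ⟨E 0 pe t 1, ?_, ?_, ?_, ?_⟩
      · rw [E_mul]
        exact E_ext (by simp) hpe1 (by simp) (by simp)
      · intro y hy
        obtain ⟨y1, y2, y3, y4, rfl⟩ := E_cases y
        rw [E_mul, E_mul] at hy
        have h1 : y1*a = a*y1 := E_inj00 hy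
        have h3 : y3*a + y4*c = c*y1 + d*y3 := E_inj20 hy
        have h4 : y4*d = d*y4 := E_inj22 hy
        rw [E_mul, E_mul]
        refine E_ext (by simp) (hpe2 y2) ?_ (by simp)
        have key : d * (y4*t - t*y1 - y3) - (y4*t - t*y1 - y3) * a = 0 := by
          have expand : d * (y4*t - t*y1 - y3) - (y4*t - t*y1 - y3) * a =
              y4*((d*t - t*a) - c) - ((d*t - t*a) - c)*y1 + (d*y4 - y4*d)*t
                + t*(y1*a - a*y1) + ((y3*a + y4*c) - (c*y1 + d*y3)) := by
            noncomm_ring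
          rw [expand, ht', h4, h1, h3]
          simp
        have hz0 : y4*t - t*y1 - y3 = 0 := by
          refine hinj (a₁ := y4*t - t*y1 - y3) (a₂ := 0) ?_
          show d*(y4*t - t*y1 - y3) - (y4*t - t*y1 - y3)*a = d*0 - 0*a
          rw [key, mul_zero, zero_mul, sub_self]
        have hfin : y4*t - t*y1 = y3 := sub_eq_zero.1 hz0
        calc t*y1 + 1*y3 = t*y1 + (y4*t - t*y1) := by rw [one_mul, ← hfin]
          _ = y3*0 + y4*t := by noncomm_ring
      · rw [E_add]
        exact E_isUnit (by simpa using ha) hpe3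
          (by simpa [add_comm] using one_add_nonunit hd)
      · rw [E_mul]
        have hrw : E (a*0) (e*pe) (c*0 + d*t) (d*1) = E 0 (e*pe) (d*t) d :=
          E_ext (by simp) rfl (by simp) (by simp)
        rw [hrw]
        exact E_qnil not_isUnit_zero hpe4 hd
    · -- a nonunit, d unit
      obtain ⟨t, ht⟩ := (hub a d (mem_jac_iff.2 ha) hd).1.2 (-c)
      have ht' : d*t - t*a = -c := ht
      have hinj := (hub a d (mem_jac_iff.2 ha) hd).1.1
      refine ⟨E 1 pe t 0, ?_, ?_, ?_, ?_⟩
      · rw [E_mul]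
        exact E_ext (by simp) hpe1 (by simp) (by simp)
      · intro y hy
        obtain ⟨y1, y2, y3, y4, rfl⟩ := E_cases y
        rw [E_mul, E_mul] at hy
        have h1 : y1*a = a*y1 := E_inj00 hy
        have h3 : y3*a + y4*c = c*y1 + d*y3 := E_inj20 hy
        have h4 : y4*d = d*y4 := E_inj22 hy
        rw [E_mul, E_mul]
        refine E_ext (by simp) (hpe2 y2) ?_ (by simp)
        have key : d * (y3 + y4*t - t*y1) - (y3 + y4*t - t*y1) * a = 0 := by
          have expand : d * (y3 + y4*t - t*y1) - (y3 + y4*t - t*y1) * a =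
              ((c*y1 + d*y3) - (y3*a + y4*c)) + y4*((d*t - t*a) - (-c))
                + (d*y4 - y4*d)*t - ((d*t - t*a) - (-c))*y1 + t*(y1*a - a*y1) := by
            noncomm_ring
          rw [expand, h3, ht', h4, h1]
          simp
        have hz0 : y3 + y4*t - t*y1 = 0 := by
          refine hinj (a₁ := y3 + y4*t - t*y1) (a₂ := 0) ?_
          show d*(y3 + y4*t - t*y1) - (y3 + y4*t - t*y1)*a = d*0 - 0*a
          rw [key, mul_zero, zero_mul, sub_self]
        have hfin : y3 + y4*t = t*y1 := sub_eq_zero.1 hz0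
        calc t*y1 + 0*y3 = y3 + y4*t := by rw [← hfin]; noncomm_ring
          _ = y3*1 + y4*t := by noncomm_ring
      · rw [E_add]
        exact E_isUnit (by simpa [add_comm] using one_add_nonunit ha) hpe3
          (by simpa using hd)
      · rw [E_mul]
        have hrw : E (a*1) (e*pe) (c*1 + d*t) (d*0) = E a (e*pe) (c + d*t) 0 :=
          E_ext (by simp) rfl (by simp) (by simp)
        rw [hrw]
        exact E_qnil ha hpe4 not_isUnit_zero
    · -- both nonunits
      refine ⟨E 1 pe 0 1, ?_, ?_, ?_, ?_⟩
      · rw [E_mul]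
        exact E_ext (by simp) hpe1 (by simp) (by simp)
      · intro y _
        obtain ⟨y1, y2, y3, y4, rfl⟩ := E_cases y
        rw [E_mul, E_mul]
        exact E_ext (by simp) (hpe2 y2) (by simp) (by simp)
      · rw [E_add]
        exact E_isUnit (by simpa [add_comm] using one_add_nonunit ha) hpe3
          (by simpa [add_comm] using one_add_nonunit hd)
      · rw [E_mul]
        have hrw : E (a*1) (e*pe) (c*1 + d*0) (d*1) = E a (e*pe) c d :=
          E_ext (by simp) rfl (by simp) (by simp)
        rw [hrw]
        exact E_qnil ha hpe4 hd
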